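/- arXiv:2012.05775 — 3 statements merged into one kernel-verified Lean document; each statement's English description precedes it below -/
import Mathlib

section
/- Let n ≥ 1 and let φ be a Lebesgue-integrable function on the unit hypercube [0,1]^n. For each i = 1, …, n let π_i : [0,1]^n → [0,1]^{n-1} be the projection forgetting the i-th coordinate. Suppose that for each i there exists a measurable set E_i ⊆ [0,1]^{n-1} of full Lebesgue measure such that for every x ∈ E_i the restriction of φ to the fiber π_i^{-1}(x) (i.e., the function t ↦ φ evaluated at the point with t inserted as i-th coordinate) is constant almost everywhere on [0,1]. Then φ is constant Lebesgue-almost everywhere on [0,1]^n. -/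
open MeasureTheory

namespace RectangleTrickAux

noncomputable abbrev μc (k : ℕ) : Measure (Fin k → ℝ) :=
  volume.restrict (Set.Icc (0 : Fin k → ℝ) 1)

noncomputable abbrev μI : Measure ℝ := volume.restrict (Set.Icc (0:ℝ) 1)

instance (k : ℕ) : IsProbabilityMeasure (μc k) := by
  constructor
  rw [Measure.restrict_apply_univ, Real.volume_Icc_pi]
  simp

instance : IsProbabilityMeasure μI := by
  constructor
  rw [Measure.restrict_apply_univ, Real.volume_Icc]
  simp

lemma mp_insert (k : ℕ) (i : Fin (k+1)) :
    MeasurePreserving (fun p : ℝ × (Fin k → ℝ) => i.insertNth p.1 p.2)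
      (μI.prod (μc k)) (μc (k+1)) := by
  have h := (measurePreserving_piFinSuccAbove (fun _ : Fin (k+1) => (volume : Measure ℝ)) i).symm
  have hfun : (fun p : ℝ × (Fin k → ℝ) => i.insertNth p.1 p.2)
      = ⇑(MeasurableEquiv.piFinSuccAbove (fun _ : Fin (k+1) => ℝ) i).symm := by
    ext p j <;> rfl
  have hpre : (MeasurableEquiv.piFinSuccAbove (fun _ : Fin (k+1) => ℝ) i).symm ⁻¹'
      (Set.Icc (0 : Fin (k+1) → ℝ) 1) = Set.Icc (0:ℝ) 1 ×ˢ Set.Icc (0 : Fin k → ℝ) 1 := by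
    ext p
    obtain ⟨t, x⟩ := p
    have : (MeasurableEquiv.piFinSuccAbove (fun _ : Fin (k+1) => ℝ) i).symm (t, x)
        = i.insertNth t x := rfl
    rw [Set.mem_preimage, this, Fin.insertNth_mem_Icc]
    simp [Set.mem_Icc, Pi.le_def, Prod.le_def, and_assoc]
    tauto
  have := h.restrict_preimage (s := Set.Icc (0 : Fin (k+1) → ℝ) 1) measurableSet_Icc
  rw [hpre, ← Measure.prod_restrict] at this
  rw [hfun]
  convert this using 2 <;> rfl


lemma mp_ae_iff {α β : Type*} [MeasurableSpace α] [MeasurableSpace β]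
    {f : α → β} {μ : Measure α} {ν : Measure β} (h : MeasurePreserving f μ ν)
    {P : β → Prop} (hP : MeasurableSet {y | P y}) :
    (∀ᵐ y ∂ν, P y) ↔ ∀ᵐ x ∂μ, P (f x) := by
  rw [← h.map_eq, ae_map_iff h.measurable.aemeasurable hP]

lemma ae_swap_iff {α β : Type*} [MeasurableSpace α] [MeasurableSpace β]
    {μ : Measure α} {ν : Measure β} [SFinite μ] [SFinite ν]
    {P : α → β → Prop} (hP : MeasurableSet {p : α × β | P p.1 p.2}) :
    (∀ᵐ y ∂ν, ∀ᵐ x ∂μ, P x y) ↔ ∀ᵐ p ∂(μ.prod ν), P p.1 p.2 := by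
  have h1 : (∀ᵐ p ∂(μ.prod ν), P p.1 p.2) ↔ ∀ᵐ q ∂(ν.prod μ), P q.2 q.1 :=
    mp_ae_iff Measure.measurePreserving_swap hP
  have h2 : (∀ᵐ q ∂(ν.prod μ), P q.2 q.1) ↔ ∀ᵐ y ∂ν, ∀ᵐ x ∂μ, P x y :=
    Measure.ae_prod_iff_ae_ae (measurable_swap hP)
  exact (h1.trans h2).symm

lemma ins_comm {n : ℕ} (t s : ℝ) (j : Fin (n+1)) (y : Fin n → ℝ) :
    Fin.insertNth (α := fun _ => ℝ) 0 t (j.insertNth s y)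
      = Fin.insertNth (α := fun _ => ℝ) j.succ s (Fin.insertNth (α := fun _ => ℝ) 0 t y) := by
  funext k
  refine Fin.cases ?_ (fun m => ?_) k
  · rw [Fin.insertNth_apply_same]
    have h0 : (0 : Fin (n+2)) = (j.succ).succAbove 0 := by simp
    rw [h0, Fin.insertNth_apply_succAbove, Fin.insertNth_apply_same]
  · have h1 : m.succ = (0 : Fin (n+2)).succAbove m := by simp
    rw [h1, Fin.insertNth_apply_succAbove, ← h1]
    refine Fin.succAboveCases j ?_ (fun l => ?_) m
    · rw [Fin.insertNth_apply_same, Fin.insertNth_apply_same]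
    · rw [Fin.insertNth_apply_succAbove, ← Fin.succ_succAbove_succ,
        Fin.insertNth_apply_succAbove, ← Fin.zero_succAbove, Fin.insertNth_apply_succAbove]

theorem aux : ∀ (n : ℕ) (φ : (Fin (n+1) → ℝ) → ℝ), Measurable φ →
    (∀ i : Fin (n+1), ∀ᵐ x ∂(μc n), ∃ c : ℝ, ∀ᵐ t ∂μI, φ (i.insertNth t x) = c) →
    ∃ c : ℝ, ∀ᵐ p ∂(μc (n+1)), φ p = c := by
  intro n
  induction n with
  | zero =>
    intro φ hφ hfib
    obtain ⟨x, c, hc⟩ := (hfib 0).exists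
    refine ⟨c, ?_⟩
    rw [mp_ae_iff (mp_insert 0 0) (measurableSet_eq_fun hφ measurable_const)]
    have h1 := (Measure.quasiMeasurePreserving_fst (μ := μI) (ν := μc 0)).ae hc
    filter_upwards [h1] with q hq
    have h2 : q.2 = x := Subsingleton.elim _ _
    rw [← h2] at hq
    exact hq
  | succ n IH =>
    intro φ hφ hfib
    have ins0 := mp_insert (n+1) (0 : Fin (n+2))
    have insM : Measurable (fun p : ℝ × (Fin (n+1) → ℝ) => (Fin.insertNth 0 p.1 p.2 : Fin (n+2) → ℝ)) :=
      ins0.measurable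
    have hrm : Measurable fun q : Fin (n+2) → ℝ => (Fin.removeNth 0 q : Fin (n+1) → ℝ) :=
      measurable_pi_iff.2 fun j => measurable_pi_apply _
    have key : ∀ i : Fin (n+2),
        Measurable (fun x : Fin (n+1) → ℝ => ∫ s, φ (i.insertNth s x) ∂μI) ∧
        (∀ᵐ x ∂(μc (n+1)), ∀ᵐ s ∂μI,
          φ (i.insertNth s x) = ∫ s, φ (i.insertNth s x) ∂μI) := by
      intro i
      have hm : Measurable fun p : (Fin (n+1) → ℝ) × ℝ => φ (i.insertNth p.2 p.1) :=
        hφ.comp ((mp_insert (n+1) i).measurable.comp measurable_swap)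
      refine ⟨(StronglyMeasurable.integral_prod_right (f := fun x s => φ (i.insertNth s x))
        hm.stronglyMeasurable).measurable, ?_⟩
      filter_upwards [hfib i] with x hx
      obtain ⟨c, hc⟩ := hx
      have hCx : (∫ s, φ (i.insertNth s x) ∂μI) = c := by
        rw [integral_congr_ae hc]; simp
      rw [hCx]; exact hc
    have Qmeas : ∀ i : Fin (n+2), MeasurableSet {x : Fin (n+1) → ℝ |
        ∀ᵐ s ∂μI, φ (i.insertNth s x) = ∫ s, φ (i.insertNth s x) ∂μI} := by
      intro i
      have hm : Measurable fun p : (Fin (n+1) → ℝ) × ℝ => φ (i.insertNth p.2 p.1) :=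
        hφ.comp ((mp_insert (n+1) i).measurable.comp measurable_swap)
      have hT : MeasurableSet {p : (Fin (n+1) → ℝ) × ℝ |
          ¬ (φ (i.insertNth p.2 p.1) = ∫ s, φ (i.insertNth s p.1) ∂μI)} :=
        (measurableSet_eq_fun hm ((key i).1.comp measurable_fst)).compl
      have hset : {x : Fin (n+1) → ℝ |
            ∀ᵐ s ∂μI, φ (i.insertNth s x) = ∫ s, φ (i.insertNth s x) ∂μI}
          = (fun x => μI (Prod.mk x ⁻¹' {p : (Fin (n+1) → ℝ) × ℝ |
              ¬ (φ (i.insertNth p.2 p.1) = ∫ s, φ (i.insertNth s p.1) ∂μI)})) ⁻¹' {0} := by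
        ext x
        simp only [Set.mem_setOf_eq, Set.mem_preimage, Set.mem_singleton_iff, ae_iff]
        rfl
      rw [hset]
      exact (measurable_measure_prodMk_left hT) (measurableSet_singleton 0)
    set g : (Fin (n+1) → ℝ) → ℝ := fun x => ∫ t, φ (Fin.insertNth 0 t x) ∂μI with hg
    have gmeas : Measurable g := (key 0).1
    have hA : ∀ᵐ p ∂(μc (n+2)), φ p = g (Fin.removeNth 0 p) := by
      rw [mp_ae_iff ins0 (P := fun p => φ p = g (Fin.removeNth 0 p))
        (measurableSet_eq_fun hφ (gmeas.comp hrm))]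
      have h2 : ∀ᵐ q ∂(μI.prod (μc (n+1))), φ (Fin.insertNth 0 q.1 q.2) = g q.2 := by
        rw [← ae_swap_iff (P := fun t x => φ (Fin.insertNth 0 t x) = g x)
          (measurableSet_eq_fun (hφ.comp insM) (gmeas.comp measurable_snd))]
        exact (key 0).2
      filter_upwards [h2] with q hq
      rwa [Fin.removeNth_insertNth]
    have hgfib : ∀ j : Fin (n+1), ∀ᵐ y ∂(μc n), ∃ c : ℝ, ∀ᵐ s ∂μI,
        g (j.insertNth s y) = c := by
      intro j
      set C : (Fin (n+1) → ℝ) → ℝ := fun x => ∫ s, φ (Fin.insertNth j.succ s x) ∂μI with hC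
      have Cmeas : Measurable C := (key j.succ).1
      have H1 : ∀ᵐ x ∂(μc (n+1)), ∀ᵐ s ∂μI, φ (Fin.insertNth j.succ s x) = C x := (key j.succ).2
      have H2 : ∀ᵐ y ∂(μc n), ∀ᵐ t ∂μI, ∀ᵐ s ∂μI,
          φ (Fin.insertNth j.succ s (Fin.insertNth 0 t y)) = C (Fin.insertNth 0 t y) := by
        have h3 := (mp_ae_iff (mp_insert n 0) (Qmeas j.succ)).1 H1
        exact (ae_swap_iff (P := fun t y => ∀ᵐ s ∂μI,
          φ (Fin.insertNth j.succ s (Fin.insertNth 0 t y)) = C (Fin.insertNth 0 t y))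
          ((mp_insert n 0).measurable (Qmeas j.succ))).2 h3
      filter_upwards [H2] with y hy
      refine ⟨∫ t, C (Fin.insertNth 0 t y) ∂μI, ?_⟩
      have hity : Measurable fun t : ℝ => (Fin.insertNth 0 t y : Fin (n+1) → ℝ) :=
        (mp_insert n 0).measurable.comp (measurable_id.prodMk measurable_const)
      have hmeas_st : MeasurableSet {p : ℝ × ℝ |
          φ (Fin.insertNth j.succ p.1 (Fin.insertNth 0 p.2 y)) = C (Fin.insertNth 0 p.2 y)} := by
        apply measurableSet_eq_fun
        · exact hφ.comp ((mp_insert (n+1) j.succ).measurable.comp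
            (measurable_fst.prodMk (hity.comp measurable_snd)))
        · exact Cmeas.comp (hity.comp measurable_snd)
      have hy2 : ∀ᵐ s ∂μI, ∀ᵐ t ∂μI,
          φ (Fin.insertNth j.succ s (Fin.insertNth 0 t y)) = C (Fin.insertNth 0 t y) :=
        Measure.ae_ae_of_ae_prod ((ae_swap_iff (P := fun s t =>
          φ (Fin.insertNth j.succ s (Fin.insertNth 0 t y)) = C (Fin.insertNth 0 t y))
          hmeas_st).1 hy)
      filter_upwards [hy2] with s hs
      have hgeq : g (j.insertNth s y) = ∫ t, φ (Fin.insertNth j.succ s (Fin.insertNth 0 t y)) ∂μI := by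
        rw [hg]
        simp only [ins_comm]
      rw [hgeq, integral_congr_ae hs]
    obtain ⟨c, hc⟩ := IH g gmeas hgfib
    refine ⟨c, ?_⟩
    have hB : ∀ᵐ p ∂(μc (n+2)), g (Fin.removeNth 0 p) = c := by
      rw [mp_ae_iff ins0 (P := fun p => g (Fin.removeNth 0 p) = c)
        (measurableSet_eq_fun (gmeas.comp hrm) measurable_const)]
      have h4 : ∀ᵐ q ∂(μI.prod (μc (n+1))), g q.2 = c := by
        rw [← ae_swap_iff (P := fun _ x => g x = c)
          (measurableSet_eq_fun (gmeas.comp measurable_snd) measurable_const)]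
        filter_upwards [hc] with x hx
        exact Filter.Eventually.of_forall fun _ => hx
      filter_upwards [h4] with q hq
      rwa [Fin.removeNth_insertNth]
    filter_upwards [hA, hB] with p h1 h2
    rw [h1, h2]

end RectangleTrickAux

open RectangleTrickAux in
/-- The rectangle trick in dimension `n + 1 ≥ 1`: an integrable function on the unit hypercube
`[0,1]^(n+1)` that is constant almost everywhere on almost every fiber of each coordinate
projection is constant almost everywhere. -/
theorem rectangle_trick
    (n : ℕ) (φ : (Fin (n + 1) → ℝ) → ℝ)
    (hφ : Integrable φ (volume.restrict (Set.Icc (0 : Fin (n + 1) → ℝ) 1)))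
    (hfib : ∀ i : Fin (n + 1), ∃ E : Set (Fin n → ℝ),
      E ⊆ Set.Icc (0 : Fin n → ℝ) 1 ∧ MeasurableSet E ∧
      (volume.restrict (Set.Icc (0 : Fin n → ℝ) 1)) E = 1 ∧
      ∀ x ∈ E, ∃ c : ℝ, ∀ᵐ t ∂(volume.restrict (Set.Icc (0 : ℝ) 1)),
        φ (Fin.insertNth i t x) = c) :
    ∃ c : ℝ, ∀ᵐ p ∂(volume.restrict (Set.Icc (0 : Fin (n + 1) → ℝ) 1)), φ p = c := by
  set φ' : (Fin (n+1) → ℝ) → ℝ := hφ.1.mk φ with hφ'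
  have hmeas : Measurable φ' := hφ.1.stronglyMeasurable_mk.measurable
  have heq : φ =ᵐ[μc (n+1)] φ' := hφ.1.ae_eq_mk
  have hfib' : ∀ i : Fin (n+1), ∀ᵐ x ∂(μc n), ∃ c : ℝ, ∀ᵐ t ∂μI,
      φ' (i.insertNth t x) = c := by
    intro i
    obtain ⟨E, _, hEm, hE1, hEc⟩ := hfib i
    have aeE : ∀ᵐ x ∂(μc n), x ∈ E := by
      rw [ae_iff]
      have hcompl := measure_compl hEm (measure_ne_top (μc n) E)
      rw [measure_univ, hE1, tsub_self] at hcompl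
      exact hcompl
    have hslice : ∀ᵐ x ∂(μc n), ∀ᵐ t ∂μI, φ (i.insertNth t x) = φ' (i.insertNth t x) := by
      have h1 := (mp_insert n i).quasiMeasurePreserving.ae heq
      have h2 := (Measure.measurePreserving_swap (μ := μc n) (ν := μI)).quasiMeasurePreserving.ae h1
      exact Measure.ae_ae_of_ae_prod h2
    filter_upwards [aeE, hslice] with x hxE hxeq
    obtain ⟨c, hc⟩ := hEc x hxE
    refine ⟨c, ?_⟩
    filter_upwards [hc, hxeq] with t h1 h2
    rw [← h2, h1]
  obtain ⟨c, hc⟩ := aux n φ' hmeas hfib'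
  refine ⟨c, ?_⟩
  filter_upwards [heq, hc] with p h1 h2
  rw [h1, h2]
end

section
/- Let φ : [0,1] × [0,1] → ℝ be Lebesgue-integrable. Suppose there exist measurable sets E_h, E_v ⊆ [0,1] of full Lebesgue measure such that for every x ∈ E_h the function y ↦ φ(x,y) is constant almost everywhere on [0,1], and for every y ∈ E_v the function x ↦ φ(x,y) is constant almost everywhere on [0,1]. Then φ is constant almost everywhere on [0,1] × [0,1] with respect to 2-dimensional Lebesgue measure. -/
open MeasureTheory

/-- The rectangle trick in dimension 2: an integrable function on the unit square which is
constant almost everywhere on almost every vertical segment and on almost every horizontal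
segment is constant almost everywhere. -/
theorem rectangle_trick_dim_two
    (φ : ℝ × ℝ → ℝ)
    (hφ : Integrable φ (volume.restrict (Set.Icc (0 : ℝ) 1 ×ˢ Set.Icc (0 : ℝ) 1)))
    (Eh Ev : Set ℝ)
    (hEh : Eh ⊆ Set.Icc (0 : ℝ) 1) (hEhm : MeasurableSet Eh)
    (hEhfull : (volume.restrict (Set.Icc (0 : ℝ) 1)) Eh = 1)
    (hEv : Ev ⊆ Set.Icc (0 : ℝ) 1) (hEvm : MeasurableSet Ev)
    (hEvfull : (volume.restrict (Set.Icc (0 : ℝ) 1)) Ev = 1)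
    (hvert : ∀ x ∈ Eh, ∃ c : ℝ, ∀ᵐ y ∂(volume.restrict (Set.Icc (0 : ℝ) 1)), φ (x, y) = c)
    (hhoriz : ∀ y ∈ Ev, ∃ c : ℝ, ∀ᵐ x ∂(volume.restrict (Set.Icc (0 : ℝ) 1)), φ (x, y) = c) :
    ∃ c : ℝ, ∀ᵐ p ∂(volume.restrict (Set.Icc (0 : ℝ) 1 ×ˢ Set.Icc (0 : ℝ) 1)), φ p = c := by
  set I : Set ℝ := Set.Icc (0 : ℝ) 1 with hI
  set μ : Measure ℝ := volume.restrict I with hμdef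
  have hμuniv : μ Set.univ = 1 := by
    simp [hμdef, hI, Real.volume_Icc]
  haveI : IsProbabilityMeasure μ := ⟨hμuniv⟩
  have hprod : volume.restrict (I ×ˢ I) = μ.prod μ := by
    rw [hμdef, Measure.prod_restrict, ← Measure.volume_eq_prod]
  rw [hprod] at hφ ⊢
  -- full measure of Eh and Ev
  have hEhae : ∀ᵐ x ∂μ, x ∈ Eh := by
    rw [ae_iff]
    have := measure_compl hEhm (measure_ne_top μ Eh)
    exact (by simpa [hμuniv, hEhfull] using this : μ Ehᶜ = 0)
  have hEvae : ∀ᵐ y ∂μ, y ∈ Ev := by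
    rw [ae_iff]
    have := measure_compl hEvm (measure_ne_top μ Ev)
    exact (by simpa [hμuniv, hEvfull] using this : μ Evᶜ = 0)
  -- measurable representative
  obtain ⟨φ', hφ'sm, hφφ'⟩ :
      ∃ φ' : ℝ × ℝ → ℝ, StronglyMeasurable φ' ∧ φ =ᵐ[μ.prod μ] φ' :=
    ⟨hφ.1.mk φ, hφ.1.stronglyMeasurable_mk, hφ.1.ae_eq_mk⟩
  have hφ'm : Measurable φ' := hφ'sm.measurable
  -- measurable superset of {φ ≠ φ'}
  obtain ⟨N, hNsub, hNm, hN0⟩ :=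
    exists_measurable_superset_of_null (ae_iff.mp hφφ')
  -- slices of N are null (both directions)
  have hNx : ∀ᵐ x ∂μ, μ {y | (x, y) ∈ N} = 0 := by
    have h := (Measure.measure_prod_null (μ := μ) (ν := μ) hNm).mp hN0
    filter_upwards [h] with x hx
    exact (by simpa using hx : μ (Prod.mk x ⁻¹' N) = 0)
  have hNy : ∀ᵐ y ∂μ, μ {x | (x, y) ∈ N} = 0 := by
    have hswap : (μ.prod μ) (Prod.swap ⁻¹' N) = 0 := by
      rw [← Measure.prod_swap, Measure.map_apply measurable_swap hNm] at hN0
      exact hN0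
    have h := (Measure.measure_prod_null (μ := μ) (ν := μ)
      (measurable_swap hNm)).mp hswap
    filter_upwards [h] with y hy
    exact (by simpa using hy : μ (Prod.mk y ⁻¹' Prod.swap ⁻¹' N) = 0)
  -- the two marginal integrals
  set ψ : ℝ → ℝ := fun x => ∫ y, φ' (x, y) ∂μ with hψdef
  set χ : ℝ → ℝ := fun y => ∫ x, φ' (x, y) ∂μ with hχdef
  have hψm : StronglyMeasurable ψ := hφ'sm.integral_prod_right'
  have hχm : StronglyMeasurable χ := hφ'sm.integral_prod_left'
  -- φ' = ψ ∘ fst a.e.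
  have hvert' : ∀ᵐ x ∂μ, ∀ᵐ y ∂μ, φ' (x, y) = ψ x := by
    filter_upwards [hEhae, hNx] with x hxEh hx0
    obtain ⟨c, hc⟩ := hvert x hxEh
    have hφφ'x : ∀ᵐ y ∂μ, φ (x, y) = φ' (x, y) := by
      rw [ae_iff]
      exact measure_mono_null (fun y hy => hNsub hy) hx0
    have hc' : ∀ᵐ y ∂μ, φ' (x, y) = c := by
      filter_upwards [hc, hφφ'x] with y h1 h2; rw [← h2, h1]
    have hψx : ψ x = c := by
      have h1 : ψ x = ∫ y, φ' (x, y) ∂μ := rfl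
      rw [h1, integral_congr_ae hc']
      simp
    filter_upwards [hc'] with y hy; rw [hy, hψx]
  have hfst : ∀ᵐ p ∂(μ.prod μ), φ' p = ψ p.1 := by
    rw [ae_iff]
    have hm : MeasurableSet {p : ℝ × ℝ | ¬ φ' p = ψ p.1} := by
      apply (measurableSet_eq_fun hφ'm (hψm.measurable.comp measurable_fst)).compl
    rw [Measure.measure_prod_null hm]
    filter_upwards [hvert'] with x hx
    simp only [Pi.zero_apply]
    exact ae_iff.mp hx
  -- φ' = χ ∘ snd a.e.
  have hhoriz' : ∀ᵐ y ∂μ, ∀ᵐ x ∂μ, φ' (x, y) = χ y := by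
    filter_upwards [hEvae, hNy] with y hyEv hy0
    obtain ⟨c, hc⟩ := hhoriz y hyEv
    have hφφ'y : ∀ᵐ x ∂μ, φ (x, y) = φ' (x, y) := by
      rw [ae_iff]
      exact measure_mono_null (fun x hx => hNsub hx) hy0
    have hc' : ∀ᵐ x ∂μ, φ' (x, y) = c := by
      filter_upwards [hc, hφφ'y] with x h1 h2; rw [← h2, h1]
    have hχy : χ y = c := by
      have h1 : χ y = ∫ x, φ' (x, y) ∂μ := rfl
      rw [h1, integral_congr_ae hc']
      simp
    filter_upwards [hc'] with x hx; rw [hx, hχy]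
  have hsnd : ∀ᵐ p ∂(μ.prod μ), φ' p = χ p.2 := by
    have hm' : MeasurableSet {q : ℝ × ℝ | ¬ φ' q.swap = χ q.1} :=
      (measurableSet_eq_fun (hφ'm.comp measurable_swap)
        (hχm.measurable.comp measurable_fst)).compl
    have hkey : (μ.prod μ) {q : ℝ × ℝ | ¬ φ' q.swap = χ q.1} = 0 := by
      rw [Measure.measure_prod_null hm']
      filter_upwards [hhoriz'] with y hy
      simp only [Pi.zero_apply]
      exact ae_iff.mp hy
    rw [ae_iff]
    have heq : {p : ℝ × ℝ | ¬ φ' p = χ p.2}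
        = Prod.swap ⁻¹' {q : ℝ × ℝ | ¬ φ' q.swap = χ q.1} := by
      ext p; simp
    rw [heq, ← Measure.map_apply measurable_swap hm', Measure.prod_swap]
    exact hkey
  -- ψ x = χ y a.e., hence a constant
  have hψχ : ∀ᵐ x ∂μ, ∀ᵐ y ∂μ, ψ x = χ y := by
    have := (hfst.and hsnd)
    have h2 : ∀ᵐ p ∂(μ.prod μ), ψ p.1 = χ p.2 := by
      filter_upwards [this] with p hp; rw [← hp.1, hp.2]
    exact Measure.ae_ae_of_ae_prod h2
  haveI : (ae μ).NeBot := ae_neBot.mpr (by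
    intro h
    rw [h] at hμuniv
    simp at hμuniv)
  obtain ⟨x₀, hx₀⟩ := hψχ.exists
  refine ⟨ψ x₀, ?_⟩
  -- lift χ = ψ x₀ a.e. to the product
  have hχconst : ∀ᵐ p ∂(μ.prod μ), χ p.2 = ψ x₀ := by
    rw [ae_iff]
    have hm : MeasurableSet {p : ℝ × ℝ | ¬ χ p.2 = ψ x₀} := by
      apply (measurableSet_eq_fun (hχm.measurable.comp measurable_snd) measurable_const).compl
    rw [Measure.measure_prod_null hm]
    refine Filter.Eventually.of_forall fun x => ?_
    have : {y | ¬ χ y = ψ x₀} = {y | ¬ ψ x₀ = χ y} := by ext y; constructor <;> exact fun h h' => h h'.symm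
    show μ (Prod.mk x ⁻¹' {p : ℝ × ℝ | ¬ χ p.2 = ψ x₀}) = 0
    have : (Prod.mk x ⁻¹' {p : ℝ × ℝ | ¬ χ p.2 = ψ x₀}) = {y | ¬ χ y = ψ x₀} := rfl
    rw [this, ← ae_iff]
    filter_upwards [hx₀] with y hy using hy.symm
  filter_upwards [hφφ', hsnd, hχconst] with p h1 h2 h3
  rw [h1, h2, h3]
end

section
/- Let Ξ = [[0,1],[−1,0]] and for s ∈ ℝ let R(s) = [[cos s, sin s],[−sin s, cos s]] ∈ M₂(ℝ). Let A, B ∈ M₂(ℝ) be such that A does not commute with Ξ and B does not commute with Ξ. Then the set S = { t ∈ [0, π) : trace(Ξ·R(t)·A·R(t)⁻¹·B) = trace(Ξ·B·R(t)·A·R(t)⁻¹) } contains at most two elements, and if t₁, t₂ ∈ S are distinct then |t₁ − t₂| = π/2. -/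
/-!
Write `α` and `β` for the components of `A` and `B` that anticommute with `Ξ`, each of the shape
`[[p, q], [q, -p]]` and read as the complex number `p + q i`. Only these components enter the
difference of the two traces, and conjugation by `R t` turns it into `-Im (conj α * β * exp (2 t i))`.
As `conj α * β ≠ 0`, two zeros `t₁, t₂` force `sin (2 (t₁ - t₂)) = 0`, so `|t₁ - t₂| = π / 2` on
`[0, π)`; and three reals at pairwise distance `π / 2` do not exist.
-/

open Matrix Real ComplexConjugate

def xiMatrix : Matrix (Fin 2) (Fin 2) ℝ := !![0, 1; -1, 0]

noncomputable def rotMatrix (s : ℝ) : Matrix (Fin 2) (Fin 2) ℝ := !![cos s, sin s; -sin s, cos s]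

theorem rotMatrix_mul_rotMatrix_neg (s : ℝ) : rotMatrix s * rotMatrix (-s) = 1 := by
  ext i j
  fin_cases i <;> fin_cases j <;> simp [rotMatrix] <;> nlinarith [sin_sq_add_cos_sq s]

theorem inv_rotMatrix (s : ℝ) : (rotMatrix s)⁻¹ = rotMatrix (-s) :=
  inv_eq_right_inv (rotMatrix_mul_rotMatrix_neg s)

/-- Twice the part `[[p, q], [q, -p]]` of `M` that anticommutes with `xiMatrix`, as `p + q i`. -/
def anticommPart (M : Matrix (Fin 2) (Fin 2) ℝ) : ℂ := ⟨M 0 0 - M 1 1, M 0 1 + M 1 0⟩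

theorem mul_xiMatrix_eq_xiMatrix_mul_iff (M : Matrix (Fin 2) (Fin 2) ℝ) :
    M * xiMatrix = xiMatrix * M ↔ anticommPart M = 0 := by
  rw [← Matrix.ext_iff, Complex.ext_iff]
  simp [Fin.forall_fin_two, xiMatrix, anticommPart, mul_apply, Fin.sum_univ_two]
  constructor
  · rintro ⟨⟨h1, h2⟩, h3, h4⟩; constructor <;> linarith
  · rintro ⟨h1, h2⟩; refine ⟨⟨?_, ?_⟩, ?_, ?_⟩ <;> linarith

theorem trace_xiMatrix_conj_sub (A B : Matrix (Fin 2) (Fin 2) ℝ) (t : ℝ) :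
    (xiMatrix * rotMatrix t * A * rotMatrix (-t) * B).trace
        - (xiMatrix * B * (rotMatrix t * A * rotMatrix (-t))).trace
      = -(conj (anticommPart A) * anticommPart B * Complex.exp (↑(2 * t) * Complex.I)).im := by
  rw [Complex.mul_im, Complex.exp_ofReal_mul_I_re, Complex.exp_ofReal_mul_I_im, eta_fin_two A,
    eta_fin_two B]
  simp [xiMatrix, rotMatrix, anticommPart, trace_fin_two, Complex.mul_im, Complex.mul_re,
    cos_two_mul, sin_two_mul]
  linear_combination
    ((A 0 0 - A 1 1) * (B 0 1 + B 1 0) - (A 0 1 + A 1 0) * (B 0 0 - B 1 1)) * sin_sq_add_cos_sq t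

theorem sin_sub_eq_zero_of_im_mul_exp_eq_zero {w : ℂ} (hw : w ≠ 0) {x y : ℝ}
    (hx : (w * Complex.exp (x * Complex.I)).im = 0)
    (hy : (w * Complex.exp (y * Complex.I)).im = 0) : sin (x - y) = 0 := by
  rw [Complex.mul_im, Complex.exp_ofReal_mul_I_re, Complex.exp_ofReal_mul_I_im] at hx hy
  -- `w e^{ix}` and `w e^{iy}` are real, hence so is `e^{i(x - y)}` unless `w = 0`.
  have hre : w.re * sin (x - y) = 0 := by
    rw [sin_sub]; linear_combination cos y * hx - cos x * hy
  have him : w.im * sin (x - y) = 0 := by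
    rw [sin_sub]; linear_combination sin x * hy - sin y * hx
  by_contra h
  exact hw (Complex.ext (by simpa [h] using hre) (by simpa [h] using him))

theorem abs_eq_pi_div_two_of_sin_two_mul_eq_zero {u : ℝ} (hu : u ≠ 0) (hlt : |u| < π)
    (h : sin (2 * u) = 0) : |u| = π / 2 := by
  obtain ⟨n, hn⟩ := sin_eq_zero_iff.mp h
  have habs : |(n : ℝ)| * π = 2 * |u| := by
    rw [← abs_of_pos pi_pos, ← abs_mul, hn, abs_mul, abs_two]
  have hn0 : n ≠ 0 := by
    rintro rfl
    exact hu (by simpa using hn.symm)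
  have hn1 : |n| = 1 := by
    have : |(n : ℝ)| < 2 := by nlinarith [pi_pos]
    rw [← Int.cast_abs] at this
    have : |n| < 2 := by exact_mod_cast this
    have := abs_pos.mpr hn0
    omega
  rw [← Int.cast_abs, hn1, Int.cast_one] at habs
  linarith

theorem Set.encard_le_two_of_abs_sub_eq {S : Set ℝ} {d : ℝ} (hd : d ≠ 0)
    (hS : ∀ x ∈ S, ∀ y ∈ S, x ≠ y → |x - y| = d) : S.encard ≤ 2 := by
  rcases S.eq_empty_or_nonempty with rfl | ⟨x, hx⟩
  · simp
  have hrest : (S \ {x}).encard ≤ 1 := by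
    refine Set.encard_le_one_iff.mpr fun y z ⟨hy, hyx⟩ ⟨hz, hzx⟩ => ?_
    by_contra hyz
    have hyx := hS y hy x hx hyx
    have hzx := hS z hz x hx hzx
    have hyz := hS y hy z hz hyz
    apply hd
    grind
  calc S.encard = (S \ {x}).encard + 1 := (Set.encard_sdiff_singleton_add_one hx).symm
    _ ≤ 1 + 1 := by gcongr
    _ = 2 := one_add_one_eq_two

/-- If `A` and `B` are `2×2` real matrices neither of which commutes with
`Ξ = [[0,1],[-1,0]]`, then the set of `t ∈ [0, π)` where
`trace (Ξ·R(t)·A·R(t)⁻¹·B) = trace (Ξ·B·R(t)·A·R(t)⁻¹)` has at most two elements, and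
any two distinct such elements differ by `π/2`. -/
theorem trace_equation_at_most_two_solutions
    (Ξ : Matrix (Fin 2) (Fin 2) ℝ) (hΞ : Ξ = !![0, 1; -1, 0])
    (R : ℝ → Matrix (Fin 2) (Fin 2) ℝ)
    (hR : ∀ s : ℝ, R s = !![Real.cos s, Real.sin s; -Real.sin s, Real.cos s])
    (A B : Matrix (Fin 2) (Fin 2) ℝ)
    (hA : A * Ξ ≠ Ξ * A) (hB : B * Ξ ≠ Ξ * B) :
    ({t : ℝ | t ∈ Set.Ico 0 π ∧
        (Ξ * R t * A * (R t)⁻¹ * B).trace = (Ξ * B * (R t * A * (R t)⁻¹)).trace}).encard ≤ 2 ∧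
      ∀ t₁ ∈ {t : ℝ | t ∈ Set.Ico 0 π ∧
          (Ξ * R t * A * (R t)⁻¹ * B).trace = (Ξ * B * (R t * A * (R t)⁻¹)).trace},
        ∀ t₂ ∈ {t : ℝ | t ∈ Set.Ico 0 π ∧
            (Ξ * R t * A * (R t)⁻¹ * B).trace = (Ξ * B * (R t * A * (R t)⁻¹)).trace},
          t₁ ≠ t₂ → |t₁ - t₂| = π / 2 := by
  obtain rfl : Ξ = xiMatrix := hΞ
  obtain rfl : R = rotMatrix := funext hR
  have hw : conj (anticommPart A) * anticommPart B ≠ 0 :=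
    mul_ne_zero ((map_ne_zero _).mpr ((mul_xiMatrix_eq_xiMatrix_mul_iff A).not.mp hA))
      ((mul_xiMatrix_eq_xiMatrix_mul_iff B).not.mp hB)
  set S := {t : ℝ | t ∈ Set.Ico 0 π ∧ (xiMatrix * rotMatrix t * A * (rotMatrix t)⁻¹ * B).trace =
    (xiMatrix * B * (rotMatrix t * A * (rotMatrix t)⁻¹)).trace}
  have hpair : ∀ t₁ ∈ S, ∀ t₂ ∈ S, t₁ ≠ t₂ → |t₁ - t₂| = π / 2 := by
    rintro t₁ ⟨⟨h₁0, h₁π⟩, h₁⟩ t₂ ⟨⟨h₂0, h₂π⟩, h₂⟩ hne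
    rw [inv_rotMatrix, ← sub_eq_zero, trace_xiMatrix_conj_sub, neg_eq_zero] at h₁ h₂
    refine abs_eq_pi_div_two_of_sin_two_mul_eq_zero (sub_ne_zero.mpr hne)
      (abs_sub_lt_iff.mpr ⟨by linarith, by linarith⟩) ?_
    rw [mul_sub]
    exact sin_sub_eq_zero_of_im_mul_exp_eq_zero hw h₁ h₂
  exact ⟨Set.encard_le_two_of_abs_sub_eq (by positivity) hpair, hpair⟩
end
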